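/- Let (X,μ) be a non-atomic probability space, T a tree on X, and M_T the associated dyadic maximal operator. Let p > 1, let φ : X → [0,∞) be in L^p(X,μ) with ∫_X φ dμ = f, and let L ≥ f. Then ∫_X max(M_T φ, L)^p dμ ≤ L^p − (p/(p−1)) L^{p−1} f + (p/(p−1)) ∫_X φ · max(M_T φ, L)^{p−1} dμ. -/

import Mathlib

/-!
Doob's argument. The maximal operator satisfies the weak-type bound
`t μ(M_T φ > t) ≤ ∫_{M_T φ > t} φ` for `t ≥ 0`: the set `{M_T φ > t}` is, up to a null set, the
disjoint union of the maximal tree elements on which the average of `φ` exceeds `t` (two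
elements of a tree are nested or disjoint). For `ψ = max (M_T φ) L` the same bound holds at every
level `t ≥ L`, and the layer-cake formula gives
`∫ ψ^p = L^p + p ∫_L^∞ t^(p-1) μ(ψ > t) dt` and
`∫ φ ψ^(p-1) = f L^(p-1) + (p-1) ∫_L^∞ t^(p-2) ∫_{ψ > t} φ dt`;
comparing the two tails under the integral yields the inequality. The second tail is finite
because `φ ∈ Lᵖ`, which justifies the subtraction.
-/


open MeasureTheory Set
open scoped ENNReal NNReal

/-- The generations of a tree determined by the child map `C`. -/
def treeGen {X : Type*} (C : Set X → Set (Set X)) : ℕ → Set (Set X)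
  | 0 => {Set.univ}
  | (m+1) => ⋃ I ∈ treeGen C m, C I

/-- `T` is a tree on the probability space `(X, μ)` with child map `C`. -/
structure IsTree {X : Type*} [MeasurableSpace X] (μ : Measure X)
    (T : Set (Set X)) (C : Set X → Set (Set X)) : Prop where
  univ_mem : Set.univ ∈ T
  measurableSet : ∀ I ∈ T, MeasurableSet I
  pos : ∀ I ∈ T, 0 < μ I
  child_sub_tree : ∀ I ∈ T, C I ⊆ T
  child_countable : ∀ I ∈ T, (C I).Countable
  child_nontriv : ∀ I ∈ T, ∃ J ∈ C I, ∃ K ∈ C I, J ≠ K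
  child_subset : ∀ I ∈ T, ∀ J ∈ C I, J ⊆ I
  child_disjoint : ∀ I ∈ T, ∀ J ∈ C I, ∀ K ∈ C I, J ≠ K → Disjoint J K
  child_cover : ∀ I ∈ T, I = ⋃₀ C I
  eq_gen : T = ⋃ m, treeGen C m
  gen_small : Filter.Tendsto (fun m => ⨆ I ∈ treeGen C m, μ I) Filter.atTop (nhds 0)

/-- The dyadic maximal operator associated to the tree `T`. -/
noncomputable def maxT {X : Type*} [MeasurableSpace X] (μ : Measure X)
    (T : Set (Set X)) (φ : X → ℝ) (x : X) : ℝ :=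
  sSup {r : ℝ | ∃ I ∈ T, x ∈ I ∧ r = (∫ u in I, |φ u| ∂μ) / (μ I).toReal}

/-- `φ : X → ℝ` has decreasing rearrangement `g : (0,1] → ℝ`. -/
def HasRearrangement {X : Type*} [MeasurableSpace X] (μ : Measure X)
    (φ : X → ℝ) (g : ℝ → ℝ) : Prop :=
  ∀ l : ℝ, 0 ≤ l → μ {x | l < φ x} = volume {t ∈ Set.Ioc (0:ℝ) 1 | l < g t}

/-- `H_p(z) = -(p-1) z^p + p z^{p-1}`. -/
noncomputable def Hfun (p z : ℝ) : ℝ := -(p-1) * z ^ p + p * z ^ (p-1)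

/-- `ω_p`, the inverse function of `H_p : [1, p/(p-1)] → [0,1]`. -/
noncomputable def omegaFun (p b : ℝ) : ℝ :=
  sSup {z : ℝ | z ∈ Set.Icc 1 (p/(p-1)) ∧ Hfun p z = b}

/-- The decreasing rearrangement `ψ*(t) = sup_{e ⊆ X, μ(e) = t} inf_{x ∈ e} ψ(x)`. -/
noncomputable def decRearr {X : Type*} [MeasurableSpace X] (μ : Measure X)
    (ψ : X → ℝ) (t : ℝ) : ℝ :=
  sSup {r : ℝ | ∃ e : Set X, μ e = ENNReal.ofReal t ∧ r = sInf (ψ '' e)}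

namespace IsTree

variable {X : Type*} [MeasurableSpace X] {μ : Measure X} {T : Set (Set X)}
  {C : Set X → Set (Set X)}

theorem treeGen_subset (hT : IsTree μ T C) : ∀ m, treeGen C m ⊆ T
  | 0 => by simpa [treeGen] using hT.univ_mem
  | m + 1 => by
    simp only [treeGen, iUnion_subset_iff]
    exact fun I hI => hT.child_sub_tree I (hT.treeGen_subset m hI)

theorem countable (hT : IsTree μ T C) : T.Countable := by
  have : ∀ m, (treeGen C m).Countable := fun m => by
    induction m with
    | zero => exact countable_singleton _
    | succ m ih =>
      exact ih.biUnion fun I hI => hT.child_countable I (hT.treeGen_subset m hI)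
  rw [hT.eq_gen]
  exact countable_iUnion this

theorem pairwise_disjoint_treeGen (hT : IsTree μ T C) :
    ∀ m, (treeGen C m).Pairwise Disjoint
  | 0 => by simp [treeGen]
  | m + 1 => by
    intro I hI J hJ hIJ
    simp only [treeGen, mem_iUnion] at hI hJ
    obtain ⟨I₀, hI₀, hI⟩ := hI
    obtain ⟨J₀, hJ₀, hJ⟩ := hJ
    have hI₀T := hT.treeGen_subset m hI₀
    have hJ₀T := hT.treeGen_subset m hJ₀
    by_cases h : I₀ = J₀
    · subst h
      exact hT.child_disjoint I₀ hI₀T I hI J hJ hIJ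
    · exact (hT.pairwise_disjoint_treeGen m hI₀ hJ₀ h).mono
        (hT.child_subset I₀ hI₀T I hI) (hT.child_subset J₀ hJ₀T J hJ)

theorem exists_treeGen_superset (hT : IsTree μ T C) {m n : ℕ} (hmn : m ≤ n) {J : Set X}
    (hJ : J ∈ treeGen C n) : ∃ K ∈ treeGen C m, J ⊆ K := by
  induction n, hmn using Nat.le_induction generalizing J with
  | base => exact ⟨J, hJ, subset_rfl⟩
  | succ n _ ih =>
    simp only [treeGen, mem_iUnion] at hJ
    obtain ⟨J₀, hJ₀, hJ⟩ := hJ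
    obtain ⟨K, hK, hJ₀K⟩ := ih hJ₀
    exact ⟨K, hK, (hT.child_subset J₀ (hT.treeGen_subset n hJ₀) J hJ).trans hJ₀K⟩

theorem subset_of_mem_treeGen (hT : IsTree μ T C) {m n : ℕ} (hmn : m ≤ n) {I J : Set X}
    (hI : I ∈ treeGen C m) (hJ : J ∈ treeGen C n) (hIJ : (I ∩ J).Nonempty) : J ⊆ I := by
  obtain ⟨K, hK, hJK⟩ := hT.exists_treeGen_superset hmn hJ
  obtain ⟨x, hxI, hxJ⟩ := hIJ
  obtain rfl : K = I := by
    by_contra h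
    exact disjoint_left.mp (hT.pairwise_disjoint_treeGen m hK hI h) (hJK hxJ) hxI
  exact hJK

theorem mem_treeGen (hT : IsTree μ T C) {I : Set X} (hI : I ∈ T) : ∃ m, I ∈ treeGen C m := by
  rw [hT.eq_gen] at hI
  exact mem_iUnion.mp hI

theorem subset_or_subset (hT : IsTree μ T C) {I J : Set X} (hI : I ∈ T) (hJ : J ∈ T)
    (hIJ : (I ∩ J).Nonempty) : I ⊆ J ∨ J ⊆ I := by
  obtain ⟨m, hm⟩ := hT.mem_treeGen hI
  obtain ⟨n, hn⟩ := hT.mem_treeGen hJ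
  rcases le_total m n with h | h
  · exact Or.inr (hT.subset_of_mem_treeGen h hm hn hIJ)
  · exact Or.inl (hT.subset_of_mem_treeGen h hn hm (inter_comm I J ▸ hIJ))

/-- Take `K ⊇ I` in `F` from the earliest possible generation: any element of `F` containing `K`
lies in a later generation, hence inside `K`. -/
theorem exists_subset_maximal (hT : IsTree μ T C) {F : Set (Set X)} (hF : F ⊆ T)
    {I : Set X} (hI : I ∈ F) : ∃ K, I ⊆ K ∧ Maximal (· ∈ F) K := by
  classical
  have hex : ∃ m, ∃ K ∈ treeGen C m, K ∈ F ∧ I ⊆ K := by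
    obtain ⟨m, hm⟩ := hT.mem_treeGen (hF hI)
    exact ⟨m, I, hm, hI, subset_rfl⟩
  obtain ⟨K, hKgen, hKF, hIK⟩ := Nat.find_spec hex
  refine ⟨K, hIK, hKF, fun J hJF hKJ => ?_⟩
  obtain ⟨n, hn⟩ := hT.mem_treeGen (hF hJF)
  have hKne : K.Nonempty := nonempty_of_measure_ne_zero (hT.pos K (hF hKF)).ne'
  have hmn : Nat.find hex ≤ n := Nat.find_min' hex ⟨J, hn, hJF, hIK.trans hKJ⟩
  exact hT.subset_of_mem_treeGen hmn hKgen hn ((inter_eq_left.mpr hKJ).symm ▸ hKne)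

theorem disjoint_of_maximal (hT : IsTree μ T C) {F : Set (Set X)} (hF : F ⊆ T) {I J : Set X}
    (hI : Maximal (· ∈ F) I) (hJ : Maximal (· ∈ F) J) (hIJ : I ≠ J) : Disjoint I J := by
  rw [disjoint_iff_inter_eq_empty, ← not_nonempty_iff_eq_empty]
  intro hne
  rcases hT.subset_or_subset (hF hI.prop) (hF hJ.prop) hne with h | h
  · exact hIJ (hI.eq_of_subset hJ.prop h)
  · exact hIJ (hJ.eq_of_subset hI.prop h).symm

end IsTree

theorem mul_measure_sUnion_le_setLIntegral {X : Type*} [MeasurableSpace X] {μ : Measure X}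
    {S : Set (Set X)} (hS : S.Countable) (hd : S.Pairwise Disjoint)
    (hm : ∀ K ∈ S, MeasurableSet K) {c : ℝ≥0∞} {g : X → ℝ≥0∞}
    (h : ∀ K ∈ S, c * μ K ≤ ∫⁻ x in K, g x ∂μ) :
    c * μ (⋃₀ S) ≤ ∫⁻ x in ⋃₀ S, g x ∂μ := by
  have : Countable S := hS.to_subtype
  rw [measure_sUnion hS hd hm, sUnion_eq_iUnion,
    lintegral_iUnion (s := fun K : S => (K : Set X)) (fun K => hm K K.2)
      (fun K L hKL => hd K.2 L.2 (Subtype.coe_ne_coe.mpr hKL)),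
    ← ENNReal.tsum_mul_left]
  exact ENNReal.tsum_le_tsum fun K => h K K.2

section MaximalFunction

variable {X : Type*} [MeasurableSpace X] {μ : Measure X} {T : Set (Set X)}
  {C : Set X → Set (Set X)} {φ : X → ℝ} {t : ℝ}

variable (μ T) in
def averages (φ : X → ℝ) (x : X) : Set ℝ :=
  {r : ℝ | ∃ I ∈ T, x ∈ I ∧ r = (∫ u in I, |φ u| ∂μ) / (μ I).toReal}

variable (μ T) in
def exceedSets (φ : X → ℝ) (t : ℝ) : Set (Set X) :=
  {I | I ∈ T ∧ t * (μ I).toReal < ∫ u in I, |φ u| ∂μ}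

variable (μ T) in
def exceedUnion (φ : X → ℝ) (t : ℝ) : Set X := ⋃₀ exceedSets μ T φ t

variable (μ T) in
/-- Where the averages of `|φ|` are unbounded, `maxT` takes the junk value `0` of `sSup`. -/
def unboundedAverageSet (φ : X → ℝ) : Set X := ⋂ n : ℕ, exceedUnion μ T φ n

theorem maxT_eq_sSup_averages : maxT μ T φ = fun x => sSup (averages μ T φ x) := rfl

theorem exceedSets_subset : exceedSets μ T φ t ⊆ T := fun _ hI => hI.1

theorem IsTree.measurableSet_exceedUnion (hT : IsTree μ T C) (φ : X → ℝ) (t : ℝ) :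
    MeasurableSet (exceedUnion μ T φ t) :=
  .sUnion (hT.countable.mono exceedSets_subset) fun I hI => hT.measurableSet I hI.1

theorem IsTree.measurableSet_unboundedAverageSet (hT : IsTree μ T C) (φ : X → ℝ) :
    MeasurableSet (unboundedAverageSet μ T φ) :=
  .iInter fun n => hT.measurableSet_exceedUnion φ n

theorem IsTree.toReal_measure_pos [IsFiniteMeasure μ] (hT : IsTree μ T C) {I : Set X}
    (hI : I ∈ T) : 0 < (μ I).toReal :=
  ENNReal.toReal_pos (hT.pos I hI).ne' (measure_ne_top μ I)

theorem IsTree.mem_exceedUnion_iff [IsFiniteMeasure μ] (hT : IsTree μ T C) {x : X} :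
    x ∈ exceedUnion μ T φ t ↔ ∃ r ∈ averages μ T φ x, t < r := by
  constructor
  · rintro ⟨I, ⟨hIT, hI⟩, hxI⟩
    exact ⟨_, ⟨I, hIT, hxI, rfl⟩, (lt_div_iff₀ (hT.toReal_measure_pos hIT)).mpr hI⟩
  · rintro ⟨r, ⟨I, hIT, hxI, rfl⟩, htr⟩
    exact ⟨I, ⟨hIT, (lt_div_iff₀ (hT.toReal_measure_pos hIT)).mp htr⟩, hxI⟩

theorem IsTree.bddAbove_averages_iff [IsFiniteMeasure μ] (hT : IsTree μ T C) {x : X} :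
    BddAbove (averages μ T φ x) ↔ x ∉ unboundedAverageSet μ T φ := by
  simp only [unboundedAverageSet, mem_iInter, not_forall, hT.mem_exceedUnion_iff, not_exists,
    not_and, not_lt]
  constructor
  · rintro ⟨c, hc⟩
    obtain ⟨n, hn⟩ := exists_nat_ge c
    exact ⟨n, fun r hr => (hc hr).trans hn⟩
  · exact fun ⟨n, hn⟩ => ⟨n, hn⟩

theorem IsTree.setOf_lt_maxT [IsFiniteMeasure μ] (hT : IsTree μ T C) (ht : 0 ≤ t) :
    {x | t < maxT μ T φ x} = exceedUnion μ T φ t \ unboundedAverageSet μ T φ := by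
  ext x
  simp only [mem_ofPred_eq, mem_sdiff, maxT_eq_sSup_averages, ← hT.bddAbove_averages_iff]
  by_cases hb : BddAbove (averages μ T φ x)
  · have hne : (averages μ T φ x).Nonempty := ⟨_, univ, hT.univ_mem, mem_univ x, rfl⟩
    rw [lt_csSup_iff hb hne, hT.mem_exceedUnion_iff]
    exact (and_iff_left hb).symm
  · simp [hb, ht]

theorem maxT_nonneg (x : X) : 0 ≤ maxT μ T φ x :=
  Real.sSup_nonneg fun _ ⟨_, _, _, hr⟩ =>
    hr ▸ div_nonneg (integral_nonneg fun _ => abs_nonneg _) ENNReal.toReal_nonneg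

theorem IsTree.measurable_maxT [IsFiniteMeasure μ] (hT : IsTree μ T C) :
    Measurable (maxT μ T φ) := by
  refine measurable_of_Ioi fun t => ?_
  rcases lt_or_ge t 0 with ht | ht
  · convert MeasurableSet.univ
    exact eq_univ_of_forall fun x => ht.trans_le (maxT_nonneg x)
  · rw [show maxT μ T φ ⁻¹' Ioi t = _ from hT.setOf_lt_maxT ht]
    exact (hT.measurableSet_exceedUnion φ t).diff (hT.measurableSet_unboundedAverageSet φ)

theorem IsTree.ofReal_mul_measure_exceedUnion_le [IsFiniteMeasure μ] (hT : IsTree μ T C)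
    (hφ : Integrable φ μ) (ht : 0 ≤ t) :
    ENNReal.ofReal t * μ (exceedUnion μ T φ t) ≤
      ∫⁻ x in exceedUnion μ T φ t, ‖φ x‖ₑ ∂μ := by
  set F := exceedSets μ T φ t
  have hFT : F ⊆ T := exceedSets_subset
  have hunion : exceedUnion μ T φ t = ⋃₀ {K | Maximal (· ∈ F) K} := by
    refine subset_antisymm (fun x ⟨I, hI, hxI⟩ => ?_) (sUnion_mono fun K hK => hK.1)
    obtain ⟨K, hIK, hK⟩ := hT.exists_subset_maximal hFT hI
    exact ⟨K, hK, hIK hxI⟩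
  rw [hunion]
  refine mul_measure_sUnion_le_setLIntegral (hT.countable.mono fun K hK => hFT hK.1)
    (fun I hI J hJ => hT.disjoint_of_maximal hFT hI hJ)
    (fun K hK => hT.measurableSet K (hFT hK.1)) fun K hK => ?_
  obtain ⟨-, hK⟩ := hK.1
  calc ENNReal.ofReal t * μ K = ENNReal.ofReal (t * (μ K).toReal) := by
        rw [ENNReal.ofReal_mul ht, ENNReal.ofReal_toReal (measure_ne_top μ K)]
    _ ≤ ENNReal.ofReal (∫ u in K, |φ u| ∂μ) := ENNReal.ofReal_le_ofReal hK.le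
    _ = ∫⁻ u in K, ‖φ u‖ₑ ∂μ := by
        simp_rw [Real.enorm_eq_ofReal_abs]
        exact ofReal_integral_eq_lintegral_ofReal hφ.abs.integrableOn
          (.of_forall fun u => abs_nonneg _)

theorem eq_zero_of_forall_natCast_mul_le {a b : ℝ≥0∞} (hb : b ≠ ⊤)
    (h : ∀ n : ℕ, (n : ℝ≥0∞) * a ≤ b) : a = 0 := by
  by_contra ha
  have : ⊤ * a ≤ b := by
    rw [← ENNReal.iSup_natCast, ENNReal.iSup_mul]
    exact iSup_le h
  exact hb (top_le_iff.mp (ENNReal.top_mul ha ▸ this))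

theorem IsTree.measure_unboundedAverageSet [IsFiniteMeasure μ] (hT : IsTree μ T C)
    (hφ : Integrable φ μ) : μ (unboundedAverageSet μ T φ) = 0 := by
  refine eq_zero_of_forall_natCast_mul_le hφ.2.ne fun n => ?_
  calc (n : ℝ≥0∞) * μ (unboundedAverageSet μ T φ)
      ≤ ENNReal.ofReal n * μ (exceedUnion μ T φ n) := by
        rw [ENNReal.ofReal_natCast]
        gcongr
        exact iInter_subset _ n
    _ ≤ ∫⁻ x in exceedUnion μ T φ n, ‖φ x‖ₑ ∂μ :=
        hT.ofReal_mul_measure_exceedUnion_le hφ n.cast_nonneg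
    _ ≤ ∫⁻ x, ‖φ x‖ₑ ∂μ := setLIntegral_le_lintegral _ _

theorem IsTree.ofReal_mul_measure_lt_maxT_le [IsFiniteMeasure μ] (hT : IsTree μ T C)
    (hφ : Integrable φ μ) (ht : 0 ≤ t) :
    ENNReal.ofReal t * μ {x | t < maxT μ T φ x} ≤
      ∫⁻ x in {x | t < maxT μ T φ x}, ‖φ x‖ₑ ∂μ := by
  have hae : {x | t < maxT μ T φ x} =ᵐ[μ] exceedUnion μ T φ t := by
    rw [hT.setOf_lt_maxT ht]
    exact sdiff_ae_eq_self.mpr (measure_mono_null inter_subset_right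
      (hT.measure_unboundedAverageSet hφ))
  rw [measure_congr hae, setLIntegral_congr hae]
  exact hT.ofReal_mul_measure_exceedUnion_le hφ ht

end MaximalFunction

theorem lintegral_ofReal_rpow_Ioo {L q : ℝ} (hL : 0 ≤ L) (hq : 0 < q) :
    ∫⁻ t in Ioo 0 L, ENNReal.ofReal (t ^ (q - 1)) = ENNReal.ofReal (L ^ q / q) := by
  have hint : IntervalIntegrable (fun t : ℝ => t ^ (q - 1)) volume 0 L :=
    intervalIntegral.intervalIntegrable_rpow' (by linarith)
  rw [setLIntegral_congr Ioo_ae_eq_Ioc, ← ofReal_integral_eq_lintegral_ofReal hint.1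
    ((ae_restrict_iff' measurableSet_Ioc).mpr (.of_forall fun t ht => Real.rpow_nonneg ht.1.le _)),
    ← intervalIntegral.integral_of_le hL,
    integral_rpow (Or.inl (by linarith)), sub_add_cancel, Real.zero_rpow hq.ne', sub_zero]

section SuperlevelSets

variable {X : Type*} [MeasurableSpace X]

/-- Below level `L` every superlevel set of `ψ` is the whole space. -/
theorem lintegral_ofReal_rpow_eq_of_le {ν : Measure X} {ψ : X → ℝ} (hψ : AEMeasurable ψ ν)
    {L q : ℝ} (hL : 0 ≤ L) (hψL : ∀ x, L ≤ ψ x) (hq : 0 < q) :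
    ∫⁻ x, ENNReal.ofReal (ψ x ^ q) ∂ν = ν univ * ENNReal.ofReal (L ^ q) +
      ENNReal.ofReal q * ∫⁻ t in Ioi L, ν {x | t < ψ x} * ENNReal.ofReal (t ^ (q - 1)) := by
  have hlow : ∫⁻ t in Ioc 0 L, ν {x | t < ψ x} * ENNReal.ofReal (t ^ (q - 1)) =
      ν univ * ENNReal.ofReal (L ^ q / q) := by
    rw [← setLIntegral_congr Ioo_ae_eq_Ioc, ← lintegral_ofReal_rpow_Ioo hL hq,
      ← lintegral_const_mul _ (by fun_prop)]
    refine setLIntegral_congr_fun measurableSet_Ioo fun t ht => ?_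
    rw [show {x | t < ψ x} = univ from eq_univ_of_forall fun x => ht.2.trans_le (hψL x)]
  rw [lintegral_rpow_eq_lintegral_meas_lt_mul ν (.of_forall fun x => hL.trans (hψL x)) hψ hq,
    ← Ioc_union_Ioi_eq_Ioi hL, lintegral_union measurableSet_Ioi (Ioc_disjoint_Ioi le_rfl),
    mul_add, hlow, mul_left_comm, ← ENNReal.ofReal_mul hq.le, mul_div_cancel₀ _ hq.ne']

variable {μ : Measure X}

/-- On `S ∩ {2φ ≤ t}` the integrand is at most `t/2`, so by `h` this part carries at most half
of `∫_S φ`. -/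
theorem setLIntegral_le_two_mul_setLIntegral_lt_two_mul {φ : X → ℝ} (hφ : Measurable φ)
    {S : Set X} (hμS : μ S ≠ ⊤) {t : ℝ} (ht : 0 ≤ t)
    (h : ENNReal.ofReal t * μ S ≤ ∫⁻ x in S, ENNReal.ofReal (φ x) ∂μ) :
    ∫⁻ x in S, ENNReal.ofReal (φ x) ∂μ ≤
      2 * ∫⁻ x in {x | t < 2 * φ x}, ENNReal.ofReal (φ x) ∂μ := by
  set B := {x | t < 2 * φ x}
  set A := ∫⁻ x in B, ENNReal.ofReal (φ x) ∂μ
  have hB : MeasurableSet B := measurableSet_lt measurable_const (hφ.const_mul 2)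
  have hsplit : ∫⁻ x in S, ENNReal.ofReal (φ x) ∂μ ≤ A + ENNReal.ofReal (t / 2) * μ S := by
    rw [← lintegral_inter_add_sdiff _ S hB]
    gcongr
    · exact lintegral_mono_set inter_subset_right
    · calc ∫⁻ x in S \ B, ENNReal.ofReal (φ x) ∂μ
          ≤ ∫⁻ _ in S \ B, ENNReal.ofReal (t / 2) ∂μ :=
            setLIntegral_mono measurable_const fun x hx =>
              ENNReal.ofReal_le_ofReal (by linarith [not_lt.mp (show ¬ t < 2 * φ x from hx.2)])
        _ ≤ ENNReal.ofReal (t / 2) * μ S := by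
            rw [setLIntegral_const]
            gcongr
            exact sdiff_subset
  have hhalf_ne_top : ENNReal.ofReal (t / 2) * μ S ≠ ⊤ :=
    ENNReal.mul_ne_top ENNReal.ofReal_ne_top hμS
  have hhalf : ENNReal.ofReal (t / 2) * μ S ≤ A := by
    refine (ENNReal.add_le_add_iff_right hhalf_ne_top).mp ?_
    calc ENNReal.ofReal (t / 2) * μ S + ENNReal.ofReal (t / 2) * μ S
        = ENNReal.ofReal t * μ S := by
          rw [← add_mul, ← ENNReal.ofReal_add (by linarith) (by linarith), add_halves]
      _ ≤ A + ENNReal.ofReal (t / 2) * μ S := h.trans hsplit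
  calc ∫⁻ x in S, ENNReal.ofReal (φ x) ∂μ ≤ A + A := hsplit.trans (by gcongr)
    _ = 2 * A := (two_mul A).symm

end SuperlevelSets

section WeakTypeToStrongType

variable {X : Type*} [MeasurableSpace X] {μ : Measure X} {p : ℝ} {φ ψ : X → ℝ} {L : ℝ}

theorem lintegral_ofReal_mul_rpow_lt_top (hp : 1 < p) (hφ0 : ∀ x, 0 ≤ φ x)
    (hφ : MemLp φ (ENNReal.ofReal p) μ) {c : ℝ} (hc : 0 ≤ c) :
    ∫⁻ x, ENNReal.ofReal (φ x * (c * φ x) ^ (p - 1)) ∂μ < ⊤ := by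
  have hint := hφ.integrable_norm_rpow (by simp; linarith) ENNReal.ofReal_ne_top
  rw [ENNReal.toReal_ofReal (by linarith)] at hint
  refine ((hint.const_mul (c ^ (p - 1))).congr (.of_forall fun x => ?_)).lintegral_lt_top
  have hpow : φ x ^ p = φ x * φ x ^ (p - 1) := by
    rw [← Real.rpow_one_add' (hφ0 x) (by linarith), add_sub_cancel]
  dsimp only
  rw [Real.norm_of_nonneg (hφ0 x), Real.mul_rpow hc (hφ0 x), hpow]
  ring

/-- By `setLIntegral_le_two_mul_setLIntegral_lt_two_mul` the integrand is dominated by that of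
the layer-cake formula for `∫ φ (2φ)^(p-1) dμ`, which is finite since `φ ∈ Lᵖ`. -/
theorem lintegral_Ioi_setLIntegral_mul_rpow_lt_top [IsFiniteMeasure μ] (hp : 1 < p)
    (hφm : Measurable φ) (hφ0 : ∀ x, 0 ≤ φ x) (hφ : MemLp φ (ENNReal.ofReal p) μ) (hL : 0 ≤ L)
    (hweak : ∀ t, L ≤ t → ENNReal.ofReal t * μ {x | t < ψ x} ≤
      ∫⁻ x in {x | t < ψ x}, ENNReal.ofReal (φ x) ∂μ) :
    ∫⁻ t in Ioi L, (∫⁻ x in {x | t < ψ x}, ENNReal.ofReal (φ x) ∂μ) *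
      ENNReal.ofReal (t ^ (p - 1 - 1)) < ⊤ := by
  set ν := μ.withDensity fun x => ENNReal.ofReal (φ x)
  have hν : ∀ t : ℝ, ν {x | t < 2 * φ x} = ∫⁻ x in {x | t < 2 * φ x}, ENNReal.ofReal (φ x) ∂μ :=
    fun t => withDensity_apply _ (measurableSet_lt measurable_const (hφm.const_mul 2))
  have hlayer := lintegral_rpow_eq_lintegral_meas_lt_mul ν
    (.of_forall fun x => mul_nonneg zero_le_two (hφ0 x)) (hφm.const_mul 2).aemeasurable
    (sub_pos.mpr hp)
  have hfin : ∫⁻ x, ENNReal.ofReal ((2 * φ x) ^ (p - 1)) ∂ν < ⊤ := by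
    rw [lintegral_withDensity_eq_lintegral_mul _ hφm.ennreal_ofReal (by fun_prop)]
    simp_rw [Pi.mul_apply, ← ENNReal.ofReal_mul (hφ0 _)]
    exact lintegral_ofReal_mul_rpow_lt_top hp hφ0 hφ zero_le_two
  rw [hlayer] at hfin
  have htail := ENNReal.lt_top_of_mul_ne_top_right hfin.ne
    (ENNReal.ofReal_pos.mpr (sub_pos.mpr hp)).ne'
  calc _ ≤ ∫⁻ t in Ioi L, 2 * ν {x | t < 2 * φ x} * ENNReal.ofReal (t ^ (p - 1 - 1)) := by
        refine setLIntegral_mono' measurableSet_Ioi fun t ht => ?_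
        rw [hν]
        gcongr
        exact setLIntegral_le_two_mul_setLIntegral_lt_two_mul hφm (measure_ne_top μ _)
          (hL.trans ht.le) (hweak t ht.le)
    _ ≤ ∫⁻ t in Ioi 0, 2 * ν {x | t < 2 * φ x} * ENNReal.ofReal (t ^ (p - 1 - 1)) :=
        lintegral_mono_set (Ioi_subset_Ioi hL)
    _ = 2 * ∫⁻ t in Ioi 0, ν {x | t < 2 * φ x} * ENNReal.ofReal (t ^ (p - 1 - 1)) := by
        simp_rw [mul_assoc]
        exact lintegral_const_mul' _ _ ENNReal.ofNat_ne_top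
    _ < ⊤ := ENNReal.mul_lt_top ENNReal.ofNat_lt_top htail

theorem integral_rpow_le_of_ofReal_mul_measure_le [IsProbabilityMeasure μ] (hp : 1 < p)
    (hφm : Measurable φ) (hφ0 : ∀ x, 0 ≤ φ x) (hφ : MemLp φ (ENNReal.ofReal p) μ)
    (hψm : Measurable ψ) (hL : 0 ≤ L) (hψL : ∀ x, L ≤ ψ x)
    (hweak : ∀ t, L ≤ t → ENNReal.ofReal t * μ {x | t < ψ x} ≤
      ∫⁻ x in {x | t < ψ x}, ENNReal.ofReal (φ x) ∂μ) :
    ∫ x, ψ x ^ p ∂μ ≤ L ^ p - p / (p - 1) * L ^ (p - 1) * ∫ x, φ x ∂μ +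
      p / (p - 1) * ∫ x, φ x * ψ x ^ (p - 1) ∂μ := by
  have hp0 : 0 < p := by linarith
  have hp1 : 0 < p - 1 := by linarith
  have hψ0 : ∀ x, 0 ≤ ψ x := fun x => hL.trans (hψL x)
  set f := ∫ x, φ x ∂μ
  set ν := μ.withDensity fun x => ENNReal.ofReal (φ x)
  have hν : ∀ t : ℝ, ν {x | t < ψ x} = ∫⁻ x in {x | t < ψ x}, ENNReal.ofReal (φ x) ∂μ :=
    fun t => withDensity_apply _ (measurableSet_lt measurable_const hψm)
  have hν_univ : ν univ = ENNReal.ofReal f := by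
    rw [withDensity_apply _ MeasurableSet.univ, Measure.restrict_univ,
      ofReal_integral_eq_lintegral_ofReal (hφ.integrable (by simp; linarith)) (.of_forall hφ0)]
  set J' := ∫⁻ t in Ioi L, μ {x | t < ψ x} * ENNReal.ofReal (t ^ (p - 1))
  set J := ∫⁻ t in Ioi L, ν {x | t < ψ x} * ENNReal.ofReal (t ^ (p - 1 - 1))
  have hJ : J ≠ ⊤ := by
    simp_rw [J, hν]
    exact (lintegral_Ioi_setLIntegral_mul_rpow_lt_top hp hφm hφ0 hφ hL hweak).ne
  have hJ'J : J' ≤ J := by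
    refine setLIntegral_mono' measurableSet_Ioi fun t (ht : L < t) => ?_
    have ht0 : 0 < t := hL.trans_lt ht
    calc μ {x | t < ψ x} * ENNReal.ofReal (t ^ (p - 1))
        = ENNReal.ofReal t * μ {x | t < ψ x} * ENNReal.ofReal (t ^ (p - 1 - 1)) := by
          rw [mul_comm (ENNReal.ofReal t), mul_assoc, ← ENNReal.ofReal_mul ht0.le,
            Real.rpow_sub_one ht0.ne' (p - 1), mul_div_cancel₀ _ ht0.ne']
      _ ≤ _ := by
          rw [hν]
          gcongr
          exact hweak t ht.le
  have hJ' : J' ≠ ⊤ := ne_top_of_le_ne_top hJ hJ'J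
  have hlhs : ∫ x, ψ x ^ p ∂μ = L ^ p + p * J'.toReal := by
    rw [integral_eq_lintegral_of_nonneg_ae (.of_forall fun x => Real.rpow_nonneg (hψ0 x) p)
      (hψm.pow_const p).aestronglyMeasurable,
      lintegral_ofReal_rpow_eq_of_le hψm.aemeasurable hL hψL hp0, measure_univ, one_mul,
      ENNReal.toReal_add ENNReal.ofReal_ne_top (ENNReal.mul_ne_top ENNReal.ofReal_ne_top hJ'),
      ENNReal.toReal_mul, ENNReal.toReal_ofReal (by positivity), ENNReal.toReal_ofReal hp0.le]
  have hrhs : ∫ x, φ x * ψ x ^ (p - 1) ∂μ = f * L ^ (p - 1) + (p - 1) * J.toReal := by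
    have hwd : ∫⁻ x, ENNReal.ofReal (φ x * ψ x ^ (p - 1)) ∂μ =
        ∫⁻ x, ENNReal.ofReal (ψ x ^ (p - 1)) ∂ν := by
      rw [lintegral_withDensity_eq_lintegral_mul _ hφm.ennreal_ofReal (by fun_prop)]
      simp_rw [Pi.mul_apply, ← ENNReal.ofReal_mul (hφ0 _)]
    rw [integral_eq_lintegral_of_nonneg_ae
      (.of_forall fun x => mul_nonneg (hφ0 x) (Real.rpow_nonneg (hψ0 x) _))
      (hφm.mul (hψm.pow_const _)).aestronglyMeasurable, hwd,
      lintegral_ofReal_rpow_eq_of_le hψm.aemeasurable hL hψL hp1, hν_univ,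
      ENNReal.toReal_add (ENNReal.mul_ne_top ENNReal.ofReal_ne_top ENNReal.ofReal_ne_top)
        (ENNReal.mul_ne_top ENNReal.ofReal_ne_top hJ),
      ENNReal.toReal_mul, ENNReal.toReal_mul, ENNReal.toReal_ofReal (integral_nonneg hφ0),
      ENNReal.toReal_ofReal (by positivity), ENNReal.toReal_ofReal hp1.le]
  have hrhs_simp : L ^ p - p / (p - 1) * L ^ (p - 1) * f +
      p / (p - 1) * (f * L ^ (p - 1) + (p - 1) * J.toReal) = L ^ p + p * J.toReal := by
    field_simp
    ring
  rw [hlhs, hrhs, hrhs_simp]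
  gcongr

end WeakTypeToStrongType

theorem statement13_general {X : Type*} [MeasurableSpace X] (μ : Measure X)
    [IsProbabilityMeasure μ]
    (T : Set (Set X)) (C : Set X → Set (Set X)) (hT : IsTree μ T C)
    (p : ℝ) (hp : 1 < p)
    (φ : X → ℝ) (hφm : Measurable φ) (hφ0 : ∀ x, 0 ≤ φ x)
    (hφLp : MemLp φ (ENNReal.ofReal p) μ)
    (f L : ℝ) (hmean : ∫ x, φ x ∂μ = f) (hL : f ≤ L) :
    (∫ x, (max (maxT μ T φ x) L) ^ p ∂μ) ≤
      L ^ p - (p / (p - 1)) * L ^ (p - 1) * f +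
        (p / (p - 1)) * ∫ x, φ x * (max (maxT μ T φ x) L) ^ (p - 1) ∂μ := by
  have hL0 : 0 ≤ L := (hmean ▸ integral_nonneg hφ0).trans hL
  have hφ1 : Integrable φ μ := hφLp.integrable (by simp; linarith)
  have hweak : ∀ t, L ≤ t → ENNReal.ofReal t * μ {x | t < max (maxT μ T φ x) L} ≤
      ∫⁻ x in {x | t < max (maxT μ T φ x) L}, ENNReal.ofReal (φ x) ∂μ := by
    intro t ht
    have hlevel : {x | t < max (maxT μ T φ x) L} = {x | t < maxT μ T φ x} := by
      simp [not_lt.mpr ht]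
    simpa only [hlevel, Real.enorm_eq_ofReal (hφ0 _)] using
      hT.ofReal_mul_measure_lt_maxT_le hφ1 (hL0.trans ht)
  subst hmean
  exact integral_rpow_le_of_ofReal_mul_measure_le hp hφm hφ0 hφLp
    (hT.measurable_maxT.max measurable_const) hL0 (fun x => le_max_right _ _) hweak

/-- inequality (5.1). -/
theorem statement13 {X : Type*} [MeasurableSpace X] (μ : Measure X)
    [IsProbabilityMeasure μ] [NullSingletonClass μ]
    (T : Set (Set X)) (C : Set X → Set (Set X)) (hT : IsTree μ T C)
    (p : ℝ) (hp : 1 < p)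
    (φ : X → ℝ) (hφm : Measurable φ) (hφ0 : ∀ x, 0 ≤ φ x)
    (hφ1 : Integrable φ μ) (hφLp : MemLp φ (ENNReal.ofReal p) μ)
    (f L : ℝ) (hmean : ∫ x, φ x ∂μ = f) (hL : f ≤ L) :
    (∫ x, (max (maxT μ T φ x) L) ^ p ∂μ) ≤
      L ^ p - (p / (p - 1)) * L ^ (p - 1) * f +
        (p / (p - 1)) * ∫ x, φ x * (max (maxT μ T φ x) L) ^ (p - 1) ∂μ :=
  statement13_general μ T C hT p hp φ hφm hφ0 hφLp f L hmean hL
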